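/- For every finite simple graph G, the independence number α(G) satisfies α(G) ≤ m_G[0, Δ(G)], i.e. G has at least α(G) signless Laplacian eigenvalues in the closed interval [0, Δ(G)], where Δ(G) is the maximum degree of G. -/

import Mathlib

open Matrix Polynomial

section Aux


variable {n R : Type*} [Fintype n] [DecidableEq n] [CommRing R]

lemma myCharpoly_conj (U W B : Matrix n n R) (h1 : U * W = 1) :
    (U * B * W).charpoly = B.charpoly := by
  have h1' : (C : R →+* R[X]).mapMatrix U * (C : R →+* R[X]).mapMatrix W = 1 := by
    rw [← _root_.map_mul, h1, _root_.map_one]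
  have key : charmatrix (U * B * W) =
      (C : R →+* R[X]).mapMatrix U * charmatrix B * (C : R →+* R[X]).mapMatrix W := by
    unfold charmatrix
    rw [mul_sub, sub_mul, ← _root_.map_mul, ← _root_.map_mul, mul_assoc]
    congr 1
    have comm : (scalar n (X:R[X])) * (C : R →+* R[X]).mapMatrix W
        = (C : R →+* R[X]).mapMatrix W * scalar n (X:R[X]) := by
      rw [scalar_commute]
      intro r; exact Commute.all _ _
    rw [mul_assoc, comm, ← mul_assoc, h1', one_mul]
  unfold Matrix.charpoly
  rw [key, det_mul, det_mul]
  have : ((C : R →+* R[X]).mapMatrix U).det * ((C : R →+* R[X]).mapMatrix W).det = 1 := by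
    rw [← det_mul, h1', det_one]
  calc ((C : R →+* R[X]).mapMatrix U).det * (charmatrix B).det * ((C : R →+* R[X]).mapMatrix W).det
      = ((C : R →+* R[X]).mapMatrix U).det * ((C : R →+* R[X]).mapMatrix W).det * (charmatrix B).det := by ring
    _ = (charmatrix B).det := by rw [this, one_mul]

lemma myCharpoly_diagonal (d : n → R) : (diagonal d).charpoly = ∏ i, (X - C (d i)) := by
  have : charmatrix (diagonal d) = diagonal (fun i => X - C (d i)) := by
    ext i j
    by_cases h : i = j
    · subst h; simp
    · simp [h, diagonal_apply_ne _ h]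
  rw [Matrix.charpoly, this, det_diagonal]

lemma myCharpoly_roots_eq {n : Type*} [Fintype n] [DecidableEq n]
    (A : Matrix n n ℝ) (hA : A.IsHermitian) :
    A.charpoly.roots = Finset.univ.val.map hA.eigenvalues := by
  have hU := (Matrix.IsHermitian.eigenvectorUnitary hA).2
  have h1 : (hA.eigenvectorUnitary : Matrix n n ℝ) * (star hA.eigenvectorUnitary : Matrix n n ℝ) = 1 :=
    Unitary.mul_star_self_of_mem hU
  have hsp := Matrix.IsHermitian.spectral_theorem hA
  have : A.charpoly = (diagonal (RCLike.ofReal ∘ hA.eigenvalues) : Matrix n n ℝ).charpoly := by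
    conv_lhs => rw [hsp]
    exact myCharpoly_conj _ _ _ h1
  rw [this]
  have hd : (RCLike.ofReal ∘ hA.eigenvalues : n → ℝ) = hA.eigenvalues := by
    funext i; simp
  rw [hd, myCharpoly_diagonal, Finset.prod_eq_multiset_prod]
  have : Multiset.map (fun i => X - C (hA.eigenvalues i)) Finset.univ.val
      = Multiset.map (fun a => X - C a) (Multiset.map hA.eigenvalues Finset.univ.val) := by
    rw [Multiset.map_map]; rfl
  rw [this, Polynomial.roots_multiset_prod_X_sub_C]

end Aux

/-- The signless Laplacian matrix of a finite simple graph: the diagonal degree matrix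
plus the adjacency matrix. -/
noncomputable def sLap {V : Type*} [Fintype V] [DecidableEq V] (G : SimpleGraph V) :
    Matrix V V ℝ :=
  letI := Classical.decRel G.Adj
  Matrix.diagonal (fun v => (G.degree v : ℝ)) + G.adjMatrix ℝ

/-- The multiset of signless Laplacian eigenvalues of `G`, i.e. the roots (with
multiplicity) of the characteristic polynomial of the signless Laplacian matrix. -/
noncomputable def qSpec {V : Type*} [Fintype V] [DecidableEq V] (G : SimpleGraph V) :
    Multiset ℝ :=
  (sLap G).charpoly.roots

/-- The number of signless Laplacian eigenvalues of `G` lying in `I`, counted with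
multiplicity. -/
noncomputable def qCount {V : Type*} [Fintype V] [DecidableEq V] (G : SimpleGraph V)
    (I : Set ℝ) : ℕ :=
  letI := Classical.decPred fun x : ℝ => x ∈ I
  Multiset.countP (fun x => x ∈ I) (qSpec G)

/-- The `k`-th largest signless Laplacian eigenvalue of `G` (1-indexed), i.e. `q_k(G)`:
the entry at position `card V - k` of the list of eigenvalues sorted in nondecreasing
order. -/
noncomputable def qEig {V : Type*} [Fintype V] [DecidableEq V] (G : SimpleGraph V)
    (k : ℕ) : ℝ :=
  ((qSpec G).sort (· ≤ ·)).getD (Fintype.card V - k) 0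

/-- The matching number `ν(G)` of `G`: the number of edges of a maximum matching. -/
noncomputable def matchingNumber {V : Type*} [Fintype V] (G : SimpleGraph V) : ℕ :=
  sSup {k | ∃ M : G.Subgraph, M.IsMatching ∧ M.edgeSet.ncard = k}

/-- The independence number `α(G)` of `G`: the maximum size of a set of pairwise
nonadjacent vertices. -/
noncomputable def indepNum {V : Type*} [Fintype V] (G : SimpleGraph V) : ℕ :=
  sSup {k | ∃ s : Finset V, (∀ u ∈ s, ∀ v ∈ s, ¬ G.Adj u v) ∧ s.card = k}

/-- The maximum degree `Δ(G)` of a graph. -/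
noncomputable def maxDeg {V : Type*} [Fintype V] (G : SimpleGraph V) : ℕ :=
  letI := Classical.decRel G.Adj
  G.maxDegree

section GraphAux

variable {V : Type*} [Fintype V] [DecidableEq V] (G : SimpleGraph V)

lemma sLap_isHermitian : (sLap G).IsHermitian := by
  letI := Classical.decRel G.Adj
  unfold sLap
  exact Matrix.IsHermitian.add (Matrix.isHermitian_diagonal _) (by
    rw [Matrix.IsHermitian, conjTranspose_eq_transpose_of_trivial, G.isSymm_adjMatrix])

lemma sLap_quadForm (x : V → ℝ) :
    letI := Classical.decRel G.Adj
    x ⬝ᵥ (sLap G *ᵥ x) =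
      (∑ v, (G.degree v : ℝ) * x v ^ 2) +
      ∑ u, ∑ v, (if G.Adj u v then (1:ℝ) else 0) * x u * x v := by
  letI := Classical.decRel G.Adj
  unfold sLap
  rw [add_mulVec, dotProduct_add]
  congr 1
  · rw [dotProduct]
    exact Finset.sum_congr rfl fun v _ => by rw [mulVec_diagonal]; ring
  · simp only [dotProduct, mulVec, dotProduct, SimpleGraph.adjMatrix_apply]
    rw [Finset.sum_congr rfl]
    intro u _
    rw [Finset.mul_sum]
    exact Finset.sum_congr rfl fun v _ => by ring

lemma degree_eq_sum : ∀ u,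
    letI := Classical.decRel G.Adj
    (G.degree u : ℝ) = ∑ v, (if G.Adj u v then (1:ℝ) else 0) := by
  letI := Classical.decRel G.Adj
  intro u
  rw [Finset.sum_boole, SimpleGraph.degree]
  congr 1
  norm_cast
  congr 1
  ext v
  simp

lemma sLap_quad_nonneg (x : V → ℝ) : 0 ≤ x ⬝ᵥ (sLap G *ᵥ x) := by
  letI := Classical.decRel G.Adj
  have key : 2 * (x ⬝ᵥ (sLap G *ᵥ x)) =
      ∑ u, ∑ v, (if G.Adj u v then (1:ℝ) else 0) * (x u + x v)^2 := by
    rw [sLap_quadForm]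
    have hD : (∑ v, (G.degree v : ℝ) * x v ^ 2)
        = ∑ u, ∑ v, (if G.Adj u v then (1:ℝ) else 0) * x u ^ 2 := by
      refine Finset.sum_congr rfl fun u _ => ?_
      rw [degree_eq_sum, Finset.sum_mul]
    have hD2 : (∑ v, (G.degree v : ℝ) * x v ^ 2)
        = ∑ u, ∑ v, (if G.Adj u v then (1:ℝ) else 0) * x v ^ 2 := by
      rw [Finset.sum_comm]
      refine Finset.sum_congr rfl fun v _ => ?_
      rw [degree_eq_sum, Finset.sum_mul]
      refine Finset.sum_congr rfl fun u _ => ?_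
      have : (if G.Adj v u then (1:ℝ) else 0) = (if G.Adj u v then (1:ℝ) else 0) := by
        simp only [SimpleGraph.adj_comm]
      rw [this]
    have expand : ∀ u v, (if G.Adj u v then (1:ℝ) else 0) * (x u + x v)^2 =
        (if G.Adj u v then (1:ℝ) else 0) * x u ^ 2 +
        (if G.Adj u v then (1:ℝ) else 0) * x v ^ 2 +
        2 * ((if G.Adj u v then (1:ℝ) else 0) * x u * x v) := by
      intro u v; ring
    simp only [expand, Finset.sum_add_distrib, ← Finset.mul_sum]
    rw [← hD, ← hD2]
    ring
  have pos : 0 ≤ ∑ u, ∑ v, (if G.Adj u v then (1:ℝ) else 0) * (x u + x v)^2 := by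
    refine Finset.sum_nonneg fun u _ => Finset.sum_nonneg fun v _ => ?_
    positivity
  linarith

section Eigen
open scoped RealInnerProductSpace

variable (hA : (sLap G).IsHermitian)

local notation "μ" => Matrix.IsHermitian.eigenvalues hA
local notation "b" => Matrix.IsHermitian.eigenvectorBasis hA

lemma inner_eq_dot (x y : EuclideanSpace ℝ V) : ⟪x, y⟫ = (x : V → ℝ) ⬝ᵥ (y : V → ℝ) := by
  rw [PiLp.inner_apply, dotProduct]
  exact Finset.sum_congr rfl fun v _ => by simp [mul_comm]

lemma b_dot (i j : V) : ((b i : EuclideanSpace ℝ V) : V → ℝ) ⬝ᵥ ((b j : EuclideanSpace ℝ V) : V → ℝ)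
    = if i = j then (1:ℝ) else 0 := by
  rw [← inner_eq_dot]
  exact orthonormal_iff_ite.mp (Matrix.IsHermitian.eigenvectorBasis hA).orthonormal i j

lemma eigen_nonneg (i : V) : 0 ≤ μ i := by
  have h : sLap G *ᵥ ((b i : EuclideanSpace ℝ V) : V → ℝ)
      = μ i • ((b i : EuclideanSpace ℝ V) : V → ℝ) :=
    Matrix.IsHermitian.mulVec_eigenvectorBasis hA i
  have hq := sLap_quad_nonneg G ((b i : EuclideanSpace ℝ V) : V → ℝ)
  rw [h, dotProduct_smul, b_dot] at hq
  simpa using hq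

end Eigen

section Main
open scoped RealInnerProductSpace
variable (hA : (sLap G).IsHermitian)

lemma dot_sum_left {ι : Type*} [Fintype ι] (f : ι → V → ℝ) (w : V → ℝ) :
    (∑ i, f i) ⬝ᵥ w = ∑ i, (f i) ⬝ᵥ w := by
  simp only [dotProduct, Finset.sum_apply, Finset.sum_mul]
  exact Finset.sum_comm

lemma dot_sum_right {ι : Type*} [Fintype ι] (f : ι → V → ℝ) (w : V → ℝ) :
    w ⬝ᵥ (∑ i, f i) = ∑ i, w ⬝ᵥ (f i) := by
  simp only [dotProduct, Finset.sum_apply, Finset.mul_sum]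
  exact Finset.sum_comm


lemma key_card (s : Finset V) (hs : ∀ u ∈ s, ∀ v ∈ s, ¬ G.Adj u v) :
    letI := Classical.decPred fun i : V => ((maxDeg G : ℝ)) < hA.eigenvalues i
    s.card + (Finset.univ.filter fun i : V => ((maxDeg G : ℝ)) < hA.eigenvalues i).card
      ≤ Fintype.card V := by
  letI := Classical.decRel G.Adj
  set Δ : ℝ := (maxDeg G : ℝ) with hΔ
  set T : Finset V := @Finset.filter V (fun i : V => Δ < hA.eigenvalues i)
    (Classical.decPred _) Finset.univ with hT
  by_contra hlt
  push_neg at hlt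
  have hlt' : Fintype.card V < s.card + T.card := by rw [hT]; exact hlt
  -- subspaces
  set U : Submodule ℝ (EuclideanSpace ℝ V) :=
    Submodule.span ℝ (Set.range ((fun v : V => EuclideanSpace.single v (1 : ℝ)) ∘
      (Subtype.val : {y // y ∈ s} → V))) with hUdef
  set W : Submodule ℝ (EuclideanSpace ℝ V) :=
    Submodule.span ℝ (Set.range (⇑hA.eigenvectorBasis ∘ (Subtype.val : {y // y ∈ T} → V)))
      with hWdef
  have hUrank : Module.finrank ℝ U = s.card := by
    rw [finrank_span_eq_card
      (((EuclideanSpace.orthonormal_single (𝕜 := ℝ) (ι := V)).comp _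
        Subtype.val_injective).linearIndependent), Fintype.card_coe]
  have hWrank : Module.finrank ℝ W = T.card := by
    rw [finrank_span_eq_card
      (((hA.eigenvectorBasis.orthonormal).comp _ Subtype.val_injective).linearIndependent),
      Fintype.card_coe]
  have hsum := Submodule.finrank_sup_add_finrank_inf_eq U W
  have hle : Module.finrank ℝ (U ⊔ W : Submodule ℝ (EuclideanSpace ℝ V)) ≤ Fintype.card V := by
    simpa [finrank_euclideanSpace] using Submodule.finrank_le (U ⊔ W)
  have hpos : U ⊓ W ≠ ⊥ := by
    intro hbot
    rw [hbot, hUrank, hWrank, finrank_bot] at hsum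
    omega
  obtain ⟨x, hxUW, hx0⟩ := (U ⊓ W).ne_bot_iff.mp hpos
  obtain ⟨hxU, hxW⟩ := Submodule.mem_inf.mp hxUW
  -- support of x
  have hsupp : ∀ y ∈ U, ∀ v, v ∉ s → (y : V → ℝ) v = 0 := by
    intro y hy
    induction hy using Submodule.span_induction with
    | mem y hy =>
      intro v hv
      obtain ⟨u, rfl⟩ := hy
      have hne : v ≠ (u : V) := fun h => hv (h ▸ u.2)
      simp [EuclideanSpace.single_apply, hne]
    | zero => intro v hv; rfl
    | add y z _ _ hy hz =>
      intro v hv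
      have : ((y + z : EuclideanSpace ℝ V) : V → ℝ) v = (y : V → ℝ) v + (z : V → ℝ) v := by simp
      rw [this, hy v hv, hz v hv, add_zero]
    | smul a y _ hy =>
      intro v hv
      have : ((a • y : EuclideanSpace ℝ V) : V → ℝ) v = a * (y : V → ℝ) v := by simp
      rw [this, hy v hv, mul_zero]
  -- coefficients of x
  have hcoef : ∀ y ∈ W, ∀ j, j ∉ T → ⟪hA.eigenvectorBasis j, y⟫ = 0 := by
    intro y hy
    induction hy using Submodule.span_induction with
    | mem y hy =>
      intro j hj
      obtain ⟨i, rfl⟩ := hy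
      have hne : j ≠ (i : V) := fun h => hj (h ▸ i.2)
      have := orthonormal_iff_ite.mp hA.eigenvectorBasis.orthonormal j (i : V)
      simpa [hne] using this
    | zero => intro j hj; simp
    | add y z _ _ hy hz => intro j hj; rw [inner_add_right, hy j hj, hz j hj, add_zero]
    | smul a y _ hy => intro j hj; rw [inner_smul_right, hy j hj, mul_zero]
  -- expansion of x
  set bf : V → V → ℝ := fun i => (hA.eigenvectorBasis i : EuclideanSpace ℝ V) with hbf
  set c : V → ℝ := fun i => ⟪hA.eigenvectorBasis i, x⟫ with hc
  have hxrepr : ∑ i, c i • hA.eigenvectorBasis i = x := hA.eigenvectorBasis.sum_repr' x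
  have hxf : (x : V → ℝ) = ∑ i, c i • bf i := by rw [← hxrepr]; simp [bf]
  have heig : ∀ i, sLap G *ᵥ bf i = hA.eigenvalues i • bf i := fun i =>
    Matrix.IsHermitian.mulVec_eigenvectorBasis hA i
  have hQx : sLap G *ᵥ (x : V → ℝ) = ∑ i, (c i * hA.eigenvalues i) • bf i := by
    calc sLap G *ᵥ (x : V → ℝ) = (sLap G).mulVecLin (∑ i, c i • bf i) := by rw [← hxf]; rfl
      _ = ∑ i, (sLap G).mulVecLin (c i • bf i) := map_sum _ _ _
      _ = ∑ i, (c i * hA.eigenvalues i) • bf i := by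
          refine Finset.sum_congr rfl fun i _ => ?_
          rw [_root_.map_smul, mulVecLin_apply, heig i, smul_smul]
  have hdotb : ∀ i j, bf i ⬝ᵥ bf j = if i = j then (1:ℝ) else 0 := b_dot G hA
  have hq : (x : V → ℝ) ⬝ᵥ (sLap G *ᵥ (x : V → ℝ)) = ∑ i, c i ^ 2 * hA.eigenvalues i := by
    rw [hQx]
    conv_lhs => rw [hxf]
    rw [dot_sum_left]
    refine Finset.sum_congr rfl fun i _ => ?_
    rw [dot_sum_right]
    simp only [smul_dotProduct, dotProduct_smul, smul_eq_mul, hdotb, mul_ite, mul_one, mul_zero,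
      Finset.sum_ite_eq', Finset.sum_ite_eq, Finset.mem_univ, if_true]
    ring
  have hn : (x : V → ℝ) ⬝ᵥ (x : V → ℝ) = ∑ i, c i ^ 2 := by
    conv_lhs => rw [hxf]
    rw [dot_sum_left]
    refine Finset.sum_congr rfl fun i _ => ?_
    rw [dot_sum_right]
    simp only [smul_dotProduct, dotProduct_smul, smul_eq_mul, hdotb, mul_ite, mul_one, mul_zero,
      Finset.sum_ite_eq', Finset.sum_ite_eq, Finset.mem_univ, if_true]
    ring
  have hc0 : ∀ j, j ∉ T → c j = 0 := fun j hj => hcoef x hxW j hj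
  have hex : ∃ i, c i ≠ 0 := by
    by_contra hall
    push_neg at hall
    apply hx0
    rw [← hxrepr]
    simp [hall]
  obtain ⟨i₀, hi₀⟩ := hex
  have hi₀T : i₀ ∈ T := by by_contra h; exact hi₀ (hc0 i₀ h)
  have hΔi₀ : Δ < hA.eigenvalues i₀ := by
    rw [hT] at hi₀T
    exact (Finset.mem_filter.mp hi₀T).2
  -- upper bound
  have hquad := sLap_quadForm G (x : V → ℝ)
  have hub : (x : V → ℝ) ⬝ᵥ (sLap G *ᵥ (x : V → ℝ)) ≤ Δ * ((x : V → ℝ) ⬝ᵥ (x : V → ℝ)) := by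
    rw [hquad]
    have hadj : (∑ u, ∑ v, (if G.Adj u v then (1:ℝ) else 0) * (x : V → ℝ) u * (x : V → ℝ) v) = 0 := by
      refine Finset.sum_eq_zero fun u _ => Finset.sum_eq_zero fun v _ => ?_
      by_cases hu : (x : V → ℝ) u = 0
      · rw [hu]; ring
      by_cases hv : (x : V → ℝ) v = 0
      · rw [hv]; ring
      have hus : u ∈ s := by by_contra h; exact hu (hsupp x hxU u h)
      have hvs : v ∈ s := by by_contra h; exact hv (hsupp x hxU v h)
      rw [if_neg (hs u hus v hvs)]; ring
    rw [hadj, add_zero]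
    have : Δ * ((x : V → ℝ) ⬝ᵥ (x : V → ℝ)) = ∑ v, Δ * (x : V → ℝ) v ^ 2 := by
      rw [dotProduct, Finset.mul_sum]
      exact Finset.sum_congr rfl fun v _ => by ring
    rw [this]
    refine Finset.sum_le_sum fun v _ => ?_
    have hdle : (G.degree v : ℝ) ≤ Δ := by
      rw [hΔ]
      exact_mod_cast G.degree_le_maxDegree v
    exact mul_le_mul_of_nonneg_right hdle (sq_nonneg _)
  -- lower bound
  have hlb : Δ * ((x : V → ℝ) ⬝ᵥ (x : V → ℝ)) < (x : V → ℝ) ⬝ᵥ (sLap G *ᵥ (x : V → ℝ)) := by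
    rw [hq, hn, Finset.mul_sum]
    refine Finset.sum_lt_sum (fun i _ => ?_) ⟨i₀, Finset.mem_univ i₀, ?_⟩
    · by_cases hci : c i = 0
      · simp [hci]
      · have hiT : i ∈ T := by by_contra h; exact hci (hc0 i h)
        have hΔi : Δ < hA.eigenvalues i := by
          rw [hT] at hiT; exact (Finset.mem_filter.mp hiT).2
        nlinarith [sq_nonneg (c i)]
    · have hpos2 : 0 < c i₀ ^ 2 := by positivity
      nlinarith
  linarith

end Main


variable {n2 R : Type*} [Fintype n2] [DecidableEq n2] [CommRing R]


end GraphAux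

/-- For every finite simple graph `G`, the independence number `α(G)` satisfies
`α(G) ≤ m_G[0, Δ(G)]`. -/
theorem indepNum_le_count_low {V : Type*} [Fintype V] [DecidableEq V]
    (G : SimpleGraph V) :
    indepNum G ≤ qCount G (Set.Icc 0 ((maxDeg G : ℝ))) := by
  have hA := sLap_isHermitian G
  have hspec : qSpec G = Finset.univ.val.map hA.eigenvalues := myCharpoly_roots_eq _ hA
  have hcount : qCount G (Set.Icc 0 ((maxDeg G : ℝ))) =
      (@Finset.filter V (fun i => hA.eigenvalues i ∈ Set.Icc 0 ((maxDeg G : ℝ)))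
        (Classical.decPred _) Finset.univ).card := by
    rw [qCount, hspec, Multiset.countP_map]
    rfl
  have hsplit : (@Finset.filter V (fun i => hA.eigenvalues i ∈ Set.Icc 0 ((maxDeg G : ℝ)))
        (Classical.decPred _) Finset.univ)
      = Finset.univ \ (@Finset.filter V (fun i => ((maxDeg G : ℝ)) < hA.eigenvalues i)
        (Classical.decPred _) Finset.univ) := by
    ext i
    simp only [Finset.mem_filter, Finset.mem_univ, true_and, Finset.mem_sdiff, Set.mem_Icc]
    constructor
    · rintro ⟨-, h2⟩; exact fun h => absurd h (not_lt.mpr h2)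
    · intro h; exact ⟨eigen_nonneg G hA i, not_lt.mp h⟩
  have hcard : (@Finset.filter V (fun i => hA.eigenvalues i ∈ Set.Icc 0 ((maxDeg G : ℝ)))
        (Classical.decPred _) Finset.univ).card
      = Fintype.card V - (@Finset.filter V (fun i => ((maxDeg G : ℝ)) < hA.eigenvalues i)
        (Classical.decPred _) Finset.univ).card := by
    rw [hsplit, Finset.card_sdiff_of_subset (Finset.filter_subset _ _), Finset.card_univ]
  rw [indepNum]
  have hne : {k | ∃ s : Finset V, (∀ u ∈ s, ∀ v ∈ s, ¬ G.Adj u v) ∧ s.card = k}.Nonempty :=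
    ⟨0, ∅, by simp, rfl⟩
  apply csSup_le hne
  rintro k ⟨s, hs, rfl⟩
  have hk := key_card G hA s hs
  rw [hcount, hcard]
  omega
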